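/- Let A and H be coassociative coalgebras equipped with a cycle cross coproduct system: linear maps φ: A→H⊗A, ψ: A→A⊗H, ρ: H→A⊗H, γ: H→H⊗A, P: A→H⊗H, Q: H→A⊗A satisfying the cycle conditions (CC3), (CC4), (CC7), (CC8) and (CCP1)–(CCP12). Then D = A^P # ^Q H, the vector space A ⊕ H with comultiplication Δ_E(a) = Δ_A(a) + φ(a) + ψ(a) + P(a) and Δ_E(x) = Δ_H(x) + ρ(x) + γ(x) + Q(x), is a coassociative coalgebra. -/

import Mathlib

open TensorProduct BigOperators

/-!
Write `i₁ : A → A × H` and `i₂ : H → A × H` for the inclusions. Evaluated on `i₁ a` or on `i₂ x`,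
both sides of coassociativity of `Δ_E` expand into sixteen terms, each lying in one of the eight
summands `i_p ⊗ i_q ⊗ i_r` of `(A × H)^{⊗3}`; the terms in a given summand are the image under
`i_p ⊗ i_q ⊗ i_r` of the two sides of one cycle condition, so the eight conditions attached to
`A` (resp. `H`) add up to the required identity.
-/

/-- The cycle cross coproduct comultiplication on `A ⊕ H`:
`Δ_E(a) = Δ_A(a) + φ(a) + ψ(a) + P(a)`, `Δ_E(x) = Δ_H(x) + ρ(x) + γ(x) + Q(x)`. -/
noncomputable def cycleCrossComul {k A H : Type*} [Field k]
    [AddCommGroup A] [Module k A] [AddCommGroup H] [Module k H]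
    (dA : A →ₗ[k] A ⊗[k] A) (dH : H →ₗ[k] H ⊗[k] H)
    (φ : A →ₗ[k] H ⊗[k] A) (ψ : A →ₗ[k] A ⊗[k] H)
    (ρ : H →ₗ[k] A ⊗[k] H) (γ : H →ₗ[k] H ⊗[k] A)
    (P : A →ₗ[k] H ⊗[k] H) (Q : H →ₗ[k] A ⊗[k] A) :
    (A × H) →ₗ[k] (A × H) ⊗[k] (A × H) :=
  (TensorProduct.map (LinearMap.inl k A H) (LinearMap.inl k A H)).comp
      (dA.comp (LinearMap.fst k A H))
    + (TensorProduct.map (LinearMap.inr k A H) (LinearMap.inl k A H)).comp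
      (φ.comp (LinearMap.fst k A H))
    + (TensorProduct.map (LinearMap.inl k A H) (LinearMap.inr k A H)).comp
      (ψ.comp (LinearMap.fst k A H))
    + (TensorProduct.map (LinearMap.inr k A H) (LinearMap.inr k A H)).comp
      (P.comp (LinearMap.fst k A H))
    + (TensorProduct.map (LinearMap.inr k A H) (LinearMap.inr k A H)).comp
      (dH.comp (LinearMap.snd k A H))
    + (TensorProduct.map (LinearMap.inl k A H) (LinearMap.inr k A H)).comp
      (ρ.comp (LinearMap.snd k A H))
    + (TensorProduct.map (LinearMap.inr k A H) (LinearMap.inl k A H)).comp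
      (γ.comp (LinearMap.snd k A H))
    + (TensorProduct.map (LinearMap.inl k A H) (LinearMap.inl k A H)).comp
      (Q.comp (LinearMap.snd k A H))

section CycleCrossComul

variable {k A H : Type*} [Field k] [AddCommGroup A] [Module k A] [AddCommGroup H] [Module k H]
  (dA : A →ₗ[k] A ⊗[k] A) (dH : H →ₗ[k] H ⊗[k] H)
  (φ : A →ₗ[k] H ⊗[k] A) (ψ : A →ₗ[k] A ⊗[k] H)
  (ρ : H →ₗ[k] A ⊗[k] H) (γ : H →ₗ[k] H ⊗[k] A)
  (P : A →ₗ[k] H ⊗[k] H) (Q : H →ₗ[k] A ⊗[k] A)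

local notation "Δ" => cycleCrossComul dA dH φ ψ ρ γ P Q
local notation "i₁" => LinearMap.inl k A H
local notation "i₂" => LinearMap.inr k A H

theorem cycleCrossComul_comp_inl :
    Δ ∘ₗ i₁ = map i₁ i₁ ∘ₗ dA + map i₂ i₁ ∘ₗ φ + map i₁ i₂ ∘ₗ ψ + map i₂ i₂ ∘ₗ P := by
  ext a
  simp [cycleCrossComul]

theorem cycleCrossComul_comp_inr :
    Δ ∘ₗ i₂ = map i₂ i₂ ∘ₗ dH + map i₁ i₂ ∘ₗ ρ + map i₂ i₁ ∘ₗ γ + map i₁ i₁ ∘ₗ Q := by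
  ext x
  simp [cycleCrossComul]

theorem cycleCrossComul_coassoc_inl
    (hCC3 : ∀ a : A,
      (LinearMap.lTensor H dH) (P a) + (LinearMap.lTensor H P) (φ a)
        = (TensorProduct.assoc k H H H)
            ((LinearMap.rTensor H dH) (P a)) +
          (TensorProduct.assoc k H H H) ((LinearMap.rTensor H P) (ψ a)))
    (hCC8 : ∀ a : A,
      (LinearMap.lTensor A dA) (dA a) + (LinearMap.lTensor A Q) (ψ a)
        = (TensorProduct.assoc k A A A)
            ((LinearMap.rTensor A dA) (dA a) + (LinearMap.rTensor A Q) (φ a)))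
    (hCCP1 : ∀ a : A,
      (LinearMap.lTensor H dA) (φ a) + (LinearMap.lTensor H Q) (P a)
        = (TensorProduct.assoc k H A A)
            ((LinearMap.rTensor A φ) (dA a) + (LinearMap.rTensor A γ) (φ a)))
    (hCCP2 : ∀ a : A,
      (TensorProduct.assoc k A A H)
          ((LinearMap.rTensor H dA) (ψ a) + (LinearMap.rTensor H Q) (P a))
        = (LinearMap.lTensor A ψ) (dA a) + (LinearMap.lTensor A ρ) (ψ a))
    (hCCP5 : ∀ a : A,
      (LinearMap.lTensor A φ) (dA a) + (LinearMap.lTensor A γ) (ψ a)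
        = (TensorProduct.assoc k A H A)
            ((LinearMap.rTensor A ψ) (dA a) + (LinearMap.rTensor A ρ) (φ a)))
    (hCCP7 : ∀ a : A,
      (LinearMap.lTensor H φ) (φ a) + (LinearMap.lTensor H γ) (P a)
        = (TensorProduct.assoc k H H A)
            ((LinearMap.rTensor A dH) (φ a) + (LinearMap.rTensor A P) (dA a)))
    (hCCP8 : ∀ a : A,
      (LinearMap.lTensor A dH) (ψ a) + (LinearMap.lTensor A P) (dA a)
        = (TensorProduct.assoc k A H H)
            ((LinearMap.rTensor H ψ) (ψ a) + (LinearMap.rTensor H ρ) (P a)))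
    (hCCP9 : ∀ a : A,
      (LinearMap.lTensor H ψ) (φ a) + (LinearMap.lTensor H ρ) (P a)
        = (TensorProduct.assoc k H A H)
            ((LinearMap.rTensor H φ) (ψ a) + (LinearMap.rTensor H γ) (P a)))
    (a : A) :
    TensorProduct.assoc k (A × H) (A × H) (A × H) ((Δ).rTensor (A × H) (Δ (i₁ a)))
      = (Δ).lTensor (A × H) (Δ (i₁ a)) := by
  rw [← LinearMap.comp_apply (Δ) i₁, cycleCrossComul_comp_inl]
  simp only [LinearMap.add_apply, LinearMap.comp_apply, map_add, LinearMap.rTensor_map,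
    LinearMap.lTensor_map, cycleCrossComul_comp_inl, cycleCrossComul_comp_inr,
    map_add_left, map_add_right, ← LinearMap.map_rTensor, ← LinearMap.map_lTensor,
    ← map_map_assoc]
  have e1 := congrArg (map i₁ (map i₁ i₁)) (hCC8 a)
  have e2 := congrArg (map i₂ (map i₁ i₁)) (hCCP1 a)
  have e3 := congrArg (map i₁ (map i₂ i₁)) (hCCP5 a)
  have e4 := congrArg (map i₂ (map i₂ i₁)) (hCCP7 a)
  have e5 := congrArg (map i₁ (map i₁ i₂)) (hCCP2 a)
  have e6 := congrArg (map i₂ (map i₁ i₂)) (hCCP9 a)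
  have e7 := congrArg (map i₁ (map i₂ i₂)) (hCCP8 a)
  have e8 := congrArg (map i₂ (map i₂ i₂)) (hCC3 a)
  simp only [map_add] at e1 e2 e3 e4 e5 e6 e7 e8
  linear_combination (norm := abel) -e1 - e2 - e3 - e4 + e5 - e6 - e7 - e8

theorem cycleCrossComul_coassoc_inr
    (hCC4 : ∀ x : H,
      (LinearMap.lTensor A dA) (Q x) + (LinearMap.lTensor A Q) (ρ x)
        = (TensorProduct.assoc k A A A)
            ((LinearMap.rTensor A dA) (Q x) + (LinearMap.rTensor A Q) (γ x)))
    (hCC7 : ∀ x : H,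
      (LinearMap.lTensor H dH) (dH x) + (LinearMap.lTensor H P) (γ x)
        = (TensorProduct.assoc k H H H)
            ((LinearMap.rTensor H dH) (dH x) + (LinearMap.rTensor H P) (ρ x)))
    (hCCP3 : ∀ x : H,
      (LinearMap.lTensor A dH) (ρ x) + (LinearMap.lTensor A P) (Q x)
        = (TensorProduct.assoc k A H H)
            ((LinearMap.rTensor H ρ) (dH x) + (LinearMap.rTensor H ψ) (ρ x)))
    (hCCP4 : ∀ x : H,
      (TensorProduct.assoc k H H A)
          ((LinearMap.rTensor A dH) (γ x) + (LinearMap.rTensor A P) (Q x))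
        = (LinearMap.lTensor H φ) (γ x) + (LinearMap.lTensor H γ) (dH x))
    (hCCP6 : ∀ x : H,
      (LinearMap.lTensor H ρ) (dH x) + (LinearMap.lTensor H ψ) (γ x)
        = (TensorProduct.assoc k H A H)
            ((LinearMap.rTensor H φ) (ρ x) + (LinearMap.rTensor H γ) (dH x)))
    (hCCP10 : ∀ x : H,
      (LinearMap.lTensor A ρ) (ρ x) + (LinearMap.lTensor A ψ) (Q x)
        = (TensorProduct.assoc k A A H)
            ((LinearMap.rTensor H dA) (ρ x) + (LinearMap.rTensor H Q) (dH x)))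
    (hCCP11 : ∀ x : H,
      (LinearMap.lTensor H dA) (γ x) + (LinearMap.lTensor H Q) (dH x)
        = (TensorProduct.assoc k H A A)
            ((LinearMap.rTensor A γ) (γ x) + (LinearMap.rTensor A φ) (Q x)))
    (hCCP12 : ∀ x : H,
      (LinearMap.lTensor A γ) (ρ x) + (LinearMap.lTensor A φ) (Q x)
        = (TensorProduct.assoc k A H A)
            ((LinearMap.rTensor A ρ) (γ x) + (LinearMap.rTensor A ψ) (Q x)))
    (x : H) :
    TensorProduct.assoc k (A × H) (A × H) (A × H) ((Δ).rTensor (A × H) (Δ (i₂ x)))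
      = (Δ).lTensor (A × H) (Δ (i₂ x)) := by
  rw [← LinearMap.comp_apply (Δ) i₂, cycleCrossComul_comp_inr]
  simp only [LinearMap.add_apply, LinearMap.comp_apply, map_add, LinearMap.rTensor_map,
    LinearMap.lTensor_map, cycleCrossComul_comp_inl, cycleCrossComul_comp_inr,
    map_add_left, map_add_right, ← LinearMap.map_rTensor, ← LinearMap.map_lTensor,
    ← map_map_assoc]
  have e1 := congrArg (map i₁ (map i₁ i₁)) (hCC4 x)
  have e2 := congrArg (map i₂ (map i₁ i₁)) (hCCP11 x)
  have e3 := congrArg (map i₁ (map i₂ i₁)) (hCCP12 x)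
  have e4 := congrArg (map i₂ (map i₂ i₁)) (hCCP4 x)
  have e5 := congrArg (map i₁ (map i₁ i₂)) (hCCP10 x)
  have e6 := congrArg (map i₂ (map i₁ i₂)) (hCCP6 x)
  have e7 := congrArg (map i₁ (map i₂ i₂)) (hCCP3 x)
  have e8 := congrArg (map i₂ (map i₂ i₂)) (hCC7 x)
  simp only [map_add] at e1 e2 e3 e4 e5 e6 e7 e8
  linear_combination (norm := abel) -e1 - e2 - e3 + e4 - e5 - e6 - e7 - e8

end CycleCrossComul

/-- Given a cycle cross coproduct system (conditions (CC3), (CC4), (CC7), (CC8) and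
(CCP1)–(CCP12)), `D = A^P # ^Q H` is a coassociative coalgebra. -/
theorem stmt9 {k A H : Type*} [Field k]
    [AddCommGroup A] [Module k A] [AddCommGroup H] [Module k H]
    (dA : A →ₗ[k] A ⊗[k] A) (dH : H →ₗ[k] H ⊗[k] H)
    (φ : A →ₗ[k] H ⊗[k] A) (ψ : A →ₗ[k] A ⊗[k] H)
    (ρ : H →ₗ[k] A ⊗[k] H) (γ : H →ₗ[k] H ⊗[k] A)
    (P : A →ₗ[k] H ⊗[k] H) (Q : H →ₗ[k] A ⊗[k] A)
    -- (CC3) a₍<1>₎⊗Δ_H(a₍<2>₎) + a₍₋₁₎⊗P(a₍₀₎) = Δ_H(a₍<1>₎)⊗a₍<2>₎ + P(a₍₀₎)⊗a₍₁₎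
    (hCC3 : ∀ a : A,
      (LinearMap.lTensor H dH) (P a) + (LinearMap.lTensor H P) (φ a)
        = (TensorProduct.assoc k H H H)
            ((LinearMap.rTensor H dH) (P a)) +
          (TensorProduct.assoc k H H H) ((LinearMap.rTensor H P) (ψ a)))
    -- (CC4) x₍{1}₎⊗Δ_A(x₍{2}₎) + x₍[-1]₎⊗Q(x₍[0]₎) = Δ_A(x₍{1}₎)⊗x₍{2}₎ + Q(x₍[0]₎)⊗x₍[1]₎
    (hCC4 : ∀ x : H,
      (LinearMap.lTensor A dA) (Q x) + (LinearMap.lTensor A Q) (ρ x)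
        = (TensorProduct.assoc k A A A)
            ((LinearMap.rTensor A dA) (Q x) + (LinearMap.rTensor A Q) (γ x)))
    -- (CC7) x₁⊗Δ_H(x₂) + x₍[0]₎⊗P(x₍[1]₎) = Δ_H(x₁)⊗x₂ + P(x₍[-1]₎)⊗x₍[0]₎
    (hCC7 : ∀ x : H,
      (LinearMap.lTensor H dH) (dH x) + (LinearMap.lTensor H P) (γ x)
        = (TensorProduct.assoc k H H H)
            ((LinearMap.rTensor H dH) (dH x) + (LinearMap.rTensor H P) (ρ x)))
    -- (CC8) a₁⊗Δ_A(a₂) + a₍₀₎⊗Q(a₍₁₎) = Δ_A(a₁)⊗a₂ + Q(a₍₋₁₎)⊗a₍₀₎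
    (hCC8 : ∀ a : A,
      (LinearMap.lTensor A dA) (dA a) + (LinearMap.lTensor A Q) (ψ a)
        = (TensorProduct.assoc k A A A)
            ((LinearMap.rTensor A dA) (dA a) + (LinearMap.rTensor A Q) (φ a)))
    -- (CCP1) a₍₋₁₎⊗Δ_A(a₍₀₎) + a₍<1>₎⊗Q(a₍<2>₎) = φ(a₁)⊗a₂ + γ(a₍₋₁₎)⊗a₍₀₎
    (hCCP1 : ∀ a : A,
      (LinearMap.lTensor H dA) (φ a) + (LinearMap.lTensor H Q) (P a)
        = (TensorProduct.assoc k H A A)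
            ((LinearMap.rTensor A φ) (dA a) + (LinearMap.rTensor A γ) (φ a)))
    -- (CCP2) Δ_A(a₍₀₎)⊗a₍₁₎ + Q(a₍<1>₎)⊗a₍<2>₎ = a₁⊗ψ(a₂) + a₍₀₎⊗ρ(a₍₁₎)
    (hCCP2 : ∀ a : A,
      (TensorProduct.assoc k A A H)
          ((LinearMap.rTensor H dA) (ψ a) + (LinearMap.rTensor H Q) (P a))
        = (LinearMap.lTensor A ψ) (dA a) + (LinearMap.lTensor A ρ) (ψ a))
    -- (CCP3) x₍[-1]₎⊗Δ_H(x₍[0]₎) + x₍{1}₎⊗P(x₍{2}₎) = ρ(x₁)⊗x₂ + ψ(x₍[-1]₎)⊗x₍[0]₎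
    (hCCP3 : ∀ x : H,
      (LinearMap.lTensor A dH) (ρ x) + (LinearMap.lTensor A P) (Q x)
        = (TensorProduct.assoc k A H H)
            ((LinearMap.rTensor H ρ) (dH x) + (LinearMap.rTensor H ψ) (ρ x)))
    -- (CCP4) Δ_H(x₍[0]₎)⊗x₍[1]₎ + P(x₍{1}₎)⊗x₍{2}₎ = x₍[0]₎⊗φ(x₍[1]₎) + x₁⊗γ(x₂)
    (hCCP4 : ∀ x : H,
      (TensorProduct.assoc k H H A)
          ((LinearMap.rTensor A dH) (γ x) + (LinearMap.rTensor A P) (Q x))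
        = (LinearMap.lTensor H φ) (γ x) + (LinearMap.lTensor H γ) (dH x))
    -- (CCP5) a₁⊗φ(a₂) + a₍₀₎⊗γ(a₍₁₎) = ψ(a₁)⊗a₂ + ρ(a₍₋₁₎)⊗a₍₀₎
    (hCCP5 : ∀ a : A,
      (LinearMap.lTensor A φ) (dA a) + (LinearMap.lTensor A γ) (ψ a)
        = (TensorProduct.assoc k A H A)
            ((LinearMap.rTensor A ψ) (dA a) + (LinearMap.rTensor A ρ) (φ a)))
    -- (CCP6) x₁⊗ρ(x₂) + x₍[0]₎⊗ψ(x₍[1]₎) = φ(x₍[-1]₎)⊗x₍[0]₎ + γ(x₁)⊗x₂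
    (hCCP6 : ∀ x : H,
      (LinearMap.lTensor H ρ) (dH x) + (LinearMap.lTensor H ψ) (γ x)
        = (TensorProduct.assoc k H A H)
            ((LinearMap.rTensor H φ) (ρ x) + (LinearMap.rTensor H γ) (dH x)))
    -- (CCP7) a₍₋₁₎⊗φ(a₍₀₎) + a₍<1>₎⊗γ(a₍<2>₎) = Δ_H(a₍₋₁₎)⊗a₍₀₎ + P(a₁)⊗a₂
    (hCCP7 : ∀ a : A,
      (LinearMap.lTensor H φ) (φ a) + (LinearMap.lTensor H γ) (P a)
        = (TensorProduct.assoc k H H A)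
            ((LinearMap.rTensor A dH) (φ a) + (LinearMap.rTensor A P) (dA a)))
    -- (CCP8) a₍₀₎⊗Δ_H(a₍₁₎) + a₁⊗P(a₂) = ψ(a₍₀₎)⊗a₍₁₎ + ρ(a₍<1>₎)⊗a₍<2>₎
    (hCCP8 : ∀ a : A,
      (LinearMap.lTensor A dH) (ψ a) + (LinearMap.lTensor A P) (dA a)
        = (TensorProduct.assoc k A H H)
            ((LinearMap.rTensor H ψ) (ψ a) + (LinearMap.rTensor H ρ) (P a)))
    -- (CCP9) a₍₋₁₎⊗ψ(a₍₀₎) + a₍<1>₎⊗ρ(a₍<2>₎) = φ(a₍₀₎)⊗a₍₁₎ + γ(a₍<1>₎)⊗a₍<2>₎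
    (hCCP9 : ∀ a : A,
      (LinearMap.lTensor H ψ) (φ a) + (LinearMap.lTensor H ρ) (P a)
        = (TensorProduct.assoc k H A H)
            ((LinearMap.rTensor H φ) (ψ a) + (LinearMap.rTensor H γ) (P a)))
    -- (CCP10) x₍[-1]₎⊗ρ(x₍[0]₎) + x₍{1}₎⊗ψ(x₍{2}₎) = Δ_A(x₍[-1]₎)⊗x₍[0]₎ + Q(x₁)⊗x₂
    (hCCP10 : ∀ x : H,
      (LinearMap.lTensor A ρ) (ρ x) + (LinearMap.lTensor A ψ) (Q x)
        = (TensorProduct.assoc k A A H)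
            ((LinearMap.rTensor H dA) (ρ x) + (LinearMap.rTensor H Q) (dH x)))
    -- (CCP11) x₍[0]₎⊗Δ_A(x₍[1]₎) + x₁⊗Q(x₂) = γ(x₍[0]₎)⊗x₍[1]₎ + φ(x₍{1}₎)⊗x₍{2}₎
    (hCCP11 : ∀ x : H,
      (LinearMap.lTensor H dA) (γ x) + (LinearMap.lTensor H Q) (dH x)
        = (TensorProduct.assoc k H A A)
            ((LinearMap.rTensor A γ) (γ x) + (LinearMap.rTensor A φ) (Q x)))
    -- (CCP12) x₍[-1]₎⊗γ(x₍[0]₎) + x₍{1}₎⊗φ(x₍{2}₎) = ρ(x₍[0]₎)⊗x₍[1]₎ + ψ(x₍{1}₎)⊗x₍{2}₎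
    (hCCP12 : ∀ x : H,
      (LinearMap.lTensor A γ) (ρ x) + (LinearMap.lTensor A φ) (Q x)
        = (TensorProduct.assoc k A H A)
            ((LinearMap.rTensor A ρ) (γ x) + (LinearMap.rTensor A ψ) (Q x))) :
    ∀ e : A × H,
      (TensorProduct.assoc k (A × H) (A × H) (A × H))
          ((LinearMap.rTensor (A × H) (cycleCrossComul dA dH φ ψ ρ γ P Q))
            (cycleCrossComul dA dH φ ψ ρ γ P Q e))
        = (LinearMap.lTensor (A × H) (cycleCrossComul dA dH φ ψ ρ γ P Q))
            (cycleCrossComul dA dH φ ψ ρ γ P Q e) := by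
  rintro ⟨a, x⟩
  rw [show ((a, x) : A × H) = LinearMap.inl k A H a + LinearMap.inr k A H x by simp]
  simp only [map_add,
    cycleCrossComul_coassoc_inl dA dH φ ψ ρ γ P Q hCC3 hCC8 hCCP1 hCCP2 hCCP5 hCCP7 hCCP8 hCCP9 a,
    cycleCrossComul_coassoc_inr dA dH φ ψ ρ γ P Q hCC4 hCC7 hCCP3 hCCP4 hCCP6 hCCP10 hCCP11
      hCCP12 x]
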